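/- arXiv:2010.00205 — 2 statements merged into one kernel-verified Lean document; each statement's English description precedes it below -/
import Mathlib

section
/- Continuity/bootstrap lemma: Let S : [0,∞) → [0,∞) be continuous with S(0) ≤ ε, and suppose there exist constants c₁,c₂,c₃,c₄ ≥ 1, a₀ > 0, T > 0, κ ∈ (0,1) and λ > 0 such that (i) sup_{τ≤T} S(τ) ≤ c(S(0)+λ) for a constant c ≥ 1, (ii) e^{-a₀T/4} ≤ κ a₀/c₄, and (iii) for all T/2 ≤ τ* ≤ τ with S bounded on [τ*,τ]: sup_{τ*≤τ'≤τ} S(τ') ≤ c₁ S(τ*) + c₂ λ + c₃ S(0) + c₄ ∫_{τ*}^{τ} e^{-a₀ τ'} sup_{τ*≤s≤τ'} S(s) dτ'. Then with C* = 3(c₁c + c₂ + c₃) and κ small enough that 2(c₁c+c₂+c₃)/(1-κ) < C*, one has S(τ) < C*(S(0) + λ) for all τ ≥ T/2. -/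
/-!
Apply the energy inequality on `[T/2, τ]` and bound the running supremum inside the integral
by `F = sup_{[T/2, τ]} S`. The weight integrates to at most `e^{-a₀T/2}/a₀`, and hypothesis (ii)
makes `c₄ e^{-a₀T/2}/a₀ ≤ κ`, so the integral term is absorbed: `(1 - κ) F` is bounded by the
remaining terms, which the local bound at `T/2` controls by `(c₁c + c₂ + c₃)(S(0) + λ)`.
-/

open Real Set

section RunningSup

variable {f : ℝ → ℝ} {a b : ℝ}

lemma le_sSup_image_Icc (hf : Continuous f) (hab : a ≤ b) : f b ≤ sSup (f '' Icc a b) :=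
  le_csSup (isCompact_Icc.image hf).bddAbove ⟨b, ⟨hab, le_rfl⟩, rfl⟩

lemma sSup_image_Icc_mono (hf : Continuous f) {s t : ℝ} (has : a ≤ s) (hst : s ≤ t) :
    sSup (f '' Icc a s) ≤ sSup (f '' Icc a t) :=
  csSup_le_csSup (isCompact_Icc.image hf).bddAbove ⟨f s, s, ⟨has, le_rfl⟩, rfl⟩
    (image_mono (Icc_subset_Icc le_rfl hst))

lemma intervalIntegrable_sSup_image_Icc (hf : Continuous f) (hab : a ≤ b) :
    IntervalIntegrable (fun x => sSup (f '' Icc a x)) MeasureTheory.volume a b := by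
  refine MonotoneOn.intervalIntegrable fun s hs t ht hst => sSup_image_Icc_mono hf ?_ hst
  rw [uIcc_of_le hab] at hs
  exact hs.1

end RunningSup

lemma integral_exp_neg_mul_le {a s t : ℝ} (ha : 0 < a) :
    ∫ x in s..t, exp (-a * x) ≤ exp (-a * s) / a := by
  have ha' : -a ≠ 0 := neg_ne_zero.mpr ha.ne'
  rw [intervalIntegral.integral_comp_mul_left (fun x => exp x) ha', integral_exp, smul_eq_mul,
    inv_neg, neg_mul, ← mul_neg, neg_sub, ← div_eq_inv_mul]
  gcongr
  linarith [exp_pos (-a * t)]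

lemma integral_exp_neg_mul_mul_le {g : ℝ → ℝ} {a s t F : ℝ} (ha : 0 < a) (hst : s ≤ t)
    (hF : 0 ≤ F) (hg : IntervalIntegrable g MeasureTheory.volume s t)
    (hgF : ∀ x ∈ Icc s t, g x ≤ F) :
    ∫ x in s..t, exp (-a * x) * g x ≤ exp (-a * s) / a * F := by
  have hexp : Continuous fun x => exp (-a * x) := by fun_prop
  calc ∫ x in s..t, exp (-a * x) * g x
      ≤ ∫ x in s..t, exp (-a * x) * F :=
        intervalIntegral.integral_mono_on hst (hg.continuousOn_mul hexp.continuousOn)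
          ((hexp.mul continuous_const).intervalIntegrable s t)
          fun x hx => mul_le_mul_of_nonneg_left (hgF x hx) (exp_pos _).le
    _ = (∫ x in s..t, exp (-a * x)) * F := intervalIntegral.integral_mul_const F _
    _ ≤ exp (-a * s) / a * F := mul_le_mul_of_nonneg_right (integral_exp_neg_mul_le ha) hF

lemma one_sub_mul_sSup_image_Icc_le {S : ℝ → ℝ} {s t a c₄ κ K : ℝ} (hS : Continuous S)
    (hSt : 0 ≤ S t) (ha : 0 < a) (hst : s ≤ t) (hc₄ : 0 ≤ c₄)
    (hsmall : c₄ * (exp (-a * s) / a) ≤ κ)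
    (h : sSup (S '' Icc s t) ≤ K + c₄ * ∫ x in s..t, exp (-a * x) * sSup (S '' Icc s x)) :
    (1 - κ) * sSup (S '' Icc s t) ≤ K := by
  set F := sSup (S '' Icc s t)
  have hF : 0 ≤ F := hSt.trans (le_sSup_image_Icc hS hst)
  have hI : ∫ x in s..t, exp (-a * x) * sSup (S '' Icc s x) ≤ exp (-a * s) / a * F :=
    integral_exp_neg_mul_mul_le ha hst hF (intervalIntegrable_sSup_image_Icc hS hst)
      fun x hx => sSup_image_Icc_mono hS hx.1 hx.2
  have hκF : c₄ * ∫ x in s..t, exp (-a * x) * sSup (S '' Icc s x) ≤ κ * F :=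
    calc _ ≤ c₄ * (exp (-a * s) / a * F) := mul_le_mul_of_nonneg_left hI hc₄
      _ = c₄ * (exp (-a * s) / a) * F := by ring
      _ ≤ κ * F := mul_le_mul_of_nonneg_right hsmall hF
  linarith

lemma mul_exp_neg_mul_half_div_le {a T κ c₄ : ℝ} (ha : 0 < a) (hT : 0 ≤ T) (hc₄ : 0 < c₄)
    (hsmall : exp (-a * T / 4) ≤ κ * a / c₄) : c₄ * (exp (-a * (T / 2)) / a) ≤ κ := by
  have hexp : exp (-a * (T / 2)) ≤ exp (-a * T / 4) := exp_le_exp.mpr (by nlinarith)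
  calc c₄ * (exp (-a * (T / 2)) / a) ≤ c₄ * (κ * a / c₄ / a) := by gcongr; exact hexp.trans hsmall
    _ = κ := by field_simp

theorem stmt18_general (S : ℝ → ℝ) (c c₁ c₂ c₃ c₄ a₀ T κ lam : ℝ)
    (hScont : Continuous S) (hSnonneg : ∀ τ, 0 ≤ S τ)
    (hc₁ : 1 ≤ c₁) (hc₂ : 1 ≤ c₂) (hc₃ : 1 ≤ c₃) (hc₄ : 1 ≤ c₄)
    (ha₀ : 0 < a₀) (hT : 0 < T) (hκ1 : κ < 1) (hlam : 0 < lam)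
    (hlocal : ∀ τ ∈ Set.Icc 0 T, S τ ≤ c * (S 0 + lam))
    (hsmall : Real.exp (-a₀ * T / 4) ≤ κ * a₀ / c₄)
    (hgronwall : ∀ τstar τ : ℝ, T / 2 ≤ τstar → τstar ≤ τ →
      sSup (S '' Set.Icc τstar τ) ≤ c₁ * S τstar + c₂ * lam + c₃ * S 0
        + c₄ * ∫ τ' in τstar..τ, Real.exp (-a₀ * τ') * sSup (S '' Set.Icc τstar τ'))
    (hκsmall : 2 * (c₁ * c + c₂ + c₃) / (1 - κ) < 3 * (c₁ * c + c₂ + c₃)) :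
    ∀ τ ≥ T / 2, S τ < 3 * (c₁ * c + c₂ + c₃) * (S 0 + lam) := by
  intro τ hτ
  set M := c₁ * c + c₂ + c₃
  set F := sSup (S '' Icc (T / 2) τ)
  have hA : 0 < S 0 + lam := by linarith [hSnonneg 0]
  have habsorb : (1 - κ) * F ≤ c₁ * S (T / 2) + c₂ * lam + c₃ * S 0 :=
    one_sub_mul_sSup_image_Icc_le hScont (hSnonneg τ) ha₀ hτ (by linarith)
      (mul_exp_neg_mul_half_div_le ha₀ hT.le (by linarith) hsmall)
      (hgronwall _ _ le_rfl hτ)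
  have hlocal_half : c₁ * S (T / 2) ≤ c₁ * (c * (S 0 + lam)) :=
    mul_le_mul_of_nonneg_left (hlocal _ ⟨by linarith, by linarith⟩) (by linarith)
  have hF : (1 - κ) * F ≤ M * (S 0 + lam) := by nlinarith [hSnonneg 0]
  have h2F : 2 * F < 3 * M * (S 0 + lam) := by
    have h1κ : 0 < 1 - κ := by linarith
    rw [div_lt_iff₀ h1κ] at hκsmall
    nlinarith
  linarith [le_sSup_image_Icc hScont hτ, hSnonneg τ]

/-- Continuity/bootstrap lemma. Under the local bound, the smallness
condition on `e^{-a₀T/4}`, and the Grönwall-type energy inequality for suprema on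
`[τ*,τ]`, the uniform bound `S(τ) < C*(S(0)+λ)` holds for all `τ ≥ T/2`, where
`C* = 3(c₁c + c₂ + c₃)`. -/
theorem stmt18 (S : ℝ → ℝ) (c c₁ c₂ c₃ c₄ a₀ T κ lam ε : ℝ)
    (hScont : Continuous S) (hSnonneg : ∀ τ, 0 ≤ S τ)
    (hS0 : S 0 ≤ ε)
    (hc : 1 ≤ c) (hc₁ : 1 ≤ c₁) (hc₂ : 1 ≤ c₂) (hc₃ : 1 ≤ c₃) (hc₄ : 1 ≤ c₄)
    (ha₀ : 0 < a₀) (hT : 0 < T) (hκ : 0 < κ) (hκ1 : κ < 1) (hlam : 0 < lam)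
    (hlocal : ∀ τ ∈ Set.Icc 0 T, S τ ≤ c * (S 0 + lam))
    (hsmall : Real.exp (-a₀ * T / 4) ≤ κ * a₀ / c₄)
    (hgronwall : ∀ τstar τ : ℝ, T / 2 ≤ τstar → τstar ≤ τ →
      sSup (S '' Set.Icc τstar τ) ≤ c₁ * S τstar + c₂ * lam + c₃ * S 0
        + c₄ * ∫ τ' in τstar..τ, Real.exp (-a₀ * τ') * sSup (S '' Set.Icc τstar τ'))
    (hκsmall : 2 * (c₁ * c + c₂ + c₃) / (1 - κ) < 3 * (c₁ * c + c₂ + c₃)) :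
    ∀ τ ≥ T / 2, S τ < 3 * (c₁ * c + c₂ + c₃) * (S 0 + lam) :=
  stmt18_general S c c₁ c₂ c₃ c₄ a₀ T κ lam hScont hSnonneg hc₁ hc₂ hc₃ hc₄ ha₀ hT hκ1 hlam hlocal
    hsmall hgronwall hκsmall
end

section
/- If a(t) is a positive C² solution of a'' = a^{2-3γ} on [0,∞) with γ > 5/3, a(0) = α > 0, a'(0) = β, then there exist constants a₀, a₁ ∈ ℝ with a₁ > 0 and a function m(t) with |m(t)| = o(1+t) as t → ∞ and |m'(t)| ≲ (1+t)^{3-3γ}, such that a(t) = a₀ + t a₁ + m(t); in particular a(t)/t → a₁ as t → ∞. -/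
open Real Filter

/-!
Since `a'' = a ^ (2 - 3γ) > 0`, the velocity `a'` increases. It cannot stay nonpositive: then `a`
would stay below `a 0`, forcing `a'' ≥ (a 0) ^ (2 - 3γ)` and `a'` to grow linearly. Once `a'` is
positive, `a` grows at least linearly, `a t ≥ δ (1 + t)`, so `a'' ≤ δ ^ (2 - 3γ) (1 + t) ^ (2 - 3γ)`
is integrable at infinity: `a'` converges to some `a₁ > 0` with `a₁ - a' t = O((1 + t) ^ (3 - 3γ))`.
As `3 - 3γ < -1`, integrating once more shows that `a t - t a₁` converges as well.
-/

section Comparison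

variable {f g f' g' : ℝ → ℝ} {x₀ : ℝ}

theorem sub_le_sub_of_hasDerivAt_le (hf : ∀ t ≥ x₀, HasDerivAt f (f' t) t)
    (hg : ∀ t ≥ x₀, HasDerivAt g (g' t) t) (hle : ∀ t ≥ x₀, f' t ≤ g' t) {x y : ℝ}
    (hx : x₀ ≤ x) (hxy : x ≤ y) : f y - f x ≤ g y - g x := by
  have hderiv : ∀ t ≥ x₀, HasDerivAt (fun s => g s - f s) (g' t - f' t) t :=
    fun t ht => (hg t ht).sub (hf t ht)
  have hmono : MonotoneOn (fun s => g s - f s) (Set.Ici x₀) := by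
    refine monotoneOn_of_hasDerivWithinAt_nonneg (f' := fun t => g' t - f' t) (convex_Ici x₀)
      (fun t ht => (hderiv t ht).continuousAt.continuousWithinAt) (fun t ht => ?_) (fun t ht => ?_)
    · exact (hderiv t (interior_subset ht)).hasDerivWithinAt
    · exact sub_nonneg.2 (hle t (interior_subset ht))
  have := hmono (Set.mem_Ici.2 hx) (Set.mem_Ici.2 (hx.trans hxy)) hxy
  linarith

theorem monotoneOn_Ici_of_hasDerivAt_nonneg (hf : ∀ t ≥ x₀, HasDerivAt f (f' t) t)
    (hf' : ∀ t ≥ x₀, 0 ≤ f' t) : MonotoneOn f (Set.Ici x₀) := fun x hx y _ hxy => by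
  have := sub_le_sub_of_hasDerivAt_le (fun t _ => hasDerivAt_const t (0 : ℝ)) hf hf' hx hxy
  linarith

end Comparison

theorem hasDerivAt_one_add_rpow {p x : ℝ} (hx : 0 < 1 + x) :
    HasDerivAt (fun t => (1 + t) ^ p) (p * (1 + x) ^ (p - 1)) x := by
  simpa using ((hasDerivAt_id x).const_add 1).rpow_const (p := p) (Or.inl hx.ne')

theorem exists_le_and_sub_le_of_hasDerivAt_le_rpow {f f' : ℝ → ℝ} {K q : ℝ} (hq : q < -1)
    (hf : ∀ t ≥ 0, HasDerivAt f (f' t) t) (hf'_nonneg : ∀ t ≥ 0, 0 ≤ f' t)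
    (hf'_le : ∀ t ≥ 0, f' t ≤ K * (1 + t) ^ q) :
    ∃ L, (∀ t ≥ 0, f t ≤ L) ∧ ∀ t ≥ 0, L - f t ≤ K / -(q + 1) * (1 + t) ^ (q + 1) := by
  set B := K / -(q + 1)
  have hK : 0 ≤ K := by simpa using (hf'_nonneg 0 le_rfl).trans (hf'_le 0 le_rfl)
  have hB : 0 ≤ B := div_nonneg hK (by linarith)
  -- `tail t` is the primitive of the bound `K (1 + t) ^ q` that vanishes at infinity.
  set tail : ℝ → ℝ := fun t => -(B * (1 + t) ^ (q + 1))
  have htail : ∀ t ≥ 0, HasDerivAt tail (K * (1 + t) ^ q) t := fun t ht => by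
    refine ((hasDerivAt_one_add_rpow (p := q + 1) (by linarith)).const_mul B).neg.congr_deriv ?_
    rw [add_sub_cancel_right, ← mul_assoc, ← neg_mul, ← mul_neg, div_mul_cancel₀ K (by linarith)]
  have htail_nonpos : ∀ t ≥ 0, tail t ≤ 0 := fun t ht =>
    neg_nonpos.2 (mul_nonneg hB (rpow_nonneg (by linarith) _))
  have hmono := monotoneOn_Ici_of_hasDerivAt_nonneg hf hf'_nonneg
  have hcomp : ∀ {x y : ℝ}, 0 ≤ x → x ≤ y → f y ≤ f x - tail x :=
    fun hx hxy => by
      have := sub_le_sub_of_hasDerivAt_le hf htail hf'_le hx hxy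
      linarith [htail_nonpos _ (hx.trans hxy)]
  have hbdd : BddAbove (f '' Set.Ici 0) := by
    refine ⟨f 0 - tail 0, ?_⟩
    rintro _ ⟨s, hs, rfl⟩
    exact hcomp le_rfl hs
  refine ⟨sSup (f '' Set.Ici 0), fun t ht => le_csSup hbdd ⟨t, ht, rfl⟩, fun t ht => ?_⟩
  suffices sSup (f '' Set.Ici 0) ≤ f t - tail t by linarith
  refine csSup_le (Set.nonempty_Ici.image f) ?_
  rintro _ ⟨s, hs, rfl⟩
  rcases le_total s t with hst | hts
  · linarith [hmono hs ht hst, htail_nonpos t ht]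
  · exact hcomp ht hts

theorem exists_deriv_pos_of_hasDerivAt_rpow {a a' : ℝ → ℝ} {p : ℝ} (hp : p ≤ 0)
    (hpos : ∀ t ≥ 0, 0 < a t) (hda : ∀ t ≥ 0, HasDerivAt a (a' t) t)
    (hda' : ∀ t ≥ 0, HasDerivAt a' (a t ^ p) t) : ∃ t ≥ 0, 0 < a' t := by
  by_contra! hvel
  have hanti : ∀ t ≥ 0, a t ≤ a 0 := fun t ht => by
    have := monotoneOn_Ici_of_hasDerivAt_nonneg (fun s hs => (hda s hs).neg)
      (fun s hs => neg_nonneg.2 (hvel s hs)) Set.self_mem_Ici ht ht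
    simpa using this
  set c := a 0 ^ p
  have hc : 0 < c := rpow_pos_of_pos (hpos 0 le_rfl) p
  have hacc : ∀ t ≥ 0, c ≤ a t ^ p := fun t ht =>
    rpow_le_rpow_of_nonpos (hpos t ht) (hanti t ht) hp
  set T := (|a' 0| + 1) / c
  have hT : c * T = |a' 0| + 1 := mul_div_cancel₀ _ hc.ne'
  have hgrowth := sub_le_sub_of_hasDerivAt_le (fun t _ => hasDerivAt_mul_const c) hda' hacc
    le_rfl (by positivity : 0 ≤ T)
  linarith [hvel T (by positivity), neg_abs_le (a' 0)]

theorem exists_mul_one_add_le_of_monotoneOn_deriv {a a' : ℝ → ℝ} (hpos : ∀ t ≥ 0, 0 < a t)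
    (hda : ∀ t ≥ 0, HasDerivAt a (a' t) t) (hmono : MonotoneOn a' (Set.Ici 0)) {t₀ : ℝ}
    (ht₀ : 0 ≤ t₀) (hvel : 0 < a' t₀) : ∃ δ > 0, ∀ t ≥ 0, δ * (1 + t) ≤ a t := by
  obtain ⟨x, hx, hmin⟩ := isCompact_Icc.exists_isMinOn (Set.nonempty_Icc.2 ht₀)
    fun s hs => (hda s hs.1).continuousAt.continuousWithinAt
  have hμ : 0 < a x := hpos x hx.1
  set δ := min (a' t₀) (a x / (1 + t₀))
  have hδ : 0 < δ := lt_min hvel (by positivity)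
  have hδμ : δ * (1 + t₀) ≤ a x := (le_div_iff₀ (by linarith)).1 (min_le_right _ _)
  refine ⟨δ, hδ, fun t ht => ?_⟩
  rcases le_total t t₀ with htt₀ | ht₀t
  · calc δ * (1 + t) ≤ δ * (1 + t₀) := by gcongr
      _ ≤ a x := hδμ
      _ ≤ a t := isMinOn_iff.1 hmin t ⟨ht, htt₀⟩
  · have hlin := sub_le_sub_of_hasDerivAt_le (x₀ := t₀) (fun _ _ => hasDerivAt_mul_const (a' t₀))
      (fun s hs => hda s (ht₀.trans hs)) (fun s hs => hmono ht₀ (ht₀.trans hs) hs) le_rfl ht₀t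
    have hμt₀ : a x ≤ a t₀ := isMinOn_iff.1 hmin t₀ ⟨ht₀, le_rfl⟩
    nlinarith [min_le_left (a' t₀) (a x / (1 + t₀))]

theorem exists_abs_sub_affine_le_of_hasDerivAt {a a' : ℝ → ℝ} {a₁ C q : ℝ} (hq : q < -1)
    (hda : ∀ t ≥ 0, HasDerivAt a (a' t) t) (hle : ∀ t ≥ 0, a' t ≤ a₁)
    (hrate : ∀ t ≥ 0, a₁ - a' t ≤ C * (1 + t) ^ q) :
    ∃ a₀ M, ∀ t ≥ 0, |a t - a₀ - t * a₁| ≤ M := by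
  obtain ⟨L, hL, hL_rate⟩ :=
    exists_le_and_sub_le_of_hasDerivAt_le_rpow (f := fun t => t * a₁ - a t) hq
      (fun t ht => (hasDerivAt_mul_const a₁).sub (hda t ht)) (fun t ht => sub_nonneg.2 (hle t ht))
      hrate
  have hC : 0 ≤ C := by simpa using (sub_nonneg.2 (hle 0 le_rfl)).trans (hrate 0 le_rfl)
  have hB : 0 ≤ C / -(q + 1) := div_nonneg hC (by linarith)
  refine ⟨-L, C / -(q + 1), fun t ht => abs_le.2 ⟨by linarith [hL t ht], ?_⟩⟩
  have hdecay : (1 + t) ^ (q + 1) ≤ 1 := rpow_le_one_of_one_le_of_nonpos (by linarith) (by linarith)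
  linarith [hL_rate t ht, mul_le_of_le_one_right hB hdecay]

theorem tendsto_div_self_of_abs_sub_affine_le {a : ℝ → ℝ} {a₀ a₁ M : ℝ}
    (h : ∀ t ≥ 0, |a t - a₀ - t * a₁| ≤ M) : Tendsto (fun t => a t / t) atTop (nhds a₁) := by
  have hdiv := tendsto_bdd_div_atTop_nhds_zero (f := fun t => a t - t * a₁) (b := a₀ - M)
    (B := a₀ + M) ((eventually_ge_atTop 0).mono fun t ht => by linarith [(abs_le.1 (h t ht)).1])
    ((eventually_ge_atTop 0).mono fun t ht => by linarith [(abs_le.1 (h t ht)).2]) tendsto_id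
  refine (zero_add a₁ ▸ hdiv.add_const a₁).congr' ?_
  filter_upwards [eventually_ne_atTop 0] with t ht
  simp only [id]
  field_simp
  ring

theorem stmt19_general (γ : ℝ) (hγ : 5 / 3 < γ) (a a' : ℝ → ℝ)
    (hpos : ∀ t ≥ (0:ℝ), 0 < a t)
    (hda : ∀ t ≥ (0:ℝ), HasDerivAt a (a' t) t)
    (hda' : ∀ t ≥ (0:ℝ), HasDerivAt a' (a t ^ (2 - 3 * γ)) t) :
    ∃ a₀ a₁ : ℝ, 0 < a₁ ∧
      (∃ C > (0:ℝ), ∀ t ≥ (0:ℝ), |a' t - a₁| ≤ C * (1 + t) ^ (3 - 3 * γ)) ∧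
      Tendsto (fun t => (a t - a₀ - t * a₁) / (1 + t)) atTop (nhds 0) ∧
      Tendsto (fun t => a t / t) atTop (nhds a₁) := by
  have hacc_nonneg : ∀ t ≥ (0:ℝ), 0 ≤ a t ^ (2 - 3 * γ) :=
    fun t ht => (rpow_pos_of_pos (hpos t ht) _).le
  obtain ⟨t₀, ht₀, hvel⟩ := exists_deriv_pos_of_hasDerivAt_rpow (by linarith) hpos hda hda'
  obtain ⟨δ, hδ, hlin⟩ := exists_mul_one_add_le_of_monotoneOn_deriv hpos hda
    (monotoneOn_Ici_of_hasDerivAt_nonneg hda' hacc_nonneg) ht₀ hvel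
  have hacc_le : ∀ t ≥ (0:ℝ), a t ^ (2 - 3 * γ) ≤ δ ^ (2 - 3 * γ) * (1 + t) ^ (2 - 3 * γ) :=
    fun t ht => by
      rw [← mul_rpow hδ.le (by linarith)]
      exact rpow_le_rpow_of_nonpos (by positivity) (hlin t ht) (by linarith)
  obtain ⟨a₁, ha'_le, ha'_rate⟩ :=
    exists_le_and_sub_le_of_hasDerivAt_le_rpow (by linarith) hda' hacc_nonneg hacc_le
  rw [show 2 - 3 * γ + 1 = 3 - 3 * γ by ring] at ha'_rate
  obtain ⟨a₀, M, hrem⟩ := exists_abs_sub_affine_le_of_hasDerivAt (by linarith) hda ha'_le ha'_rate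
  refine ⟨a₀, a₁, hvel.trans_le (ha'_le t₀ ht₀),
    ⟨δ ^ (2 - 3 * γ) / -(3 - 3 * γ), div_pos (rpow_pos_of_pos hδ _) (by linarith), fun t ht => ?_⟩,
    ?_, tendsto_div_self_of_abs_sub_affine_le hrem⟩
  · rw [abs_sub_comm, abs_of_nonneg (sub_nonneg.2 (ha'_le t ht))]
    exact ha'_rate t ht
  · exact tendsto_bdd_div_atTop_nhds_zero
      ((eventually_ge_atTop 0).mono fun t ht => (abs_le.1 (hrem t ht)).1)
      ((eventually_ge_atTop 0).mono fun t ht => (abs_le.1 (hrem t ht)).2)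
      (tendsto_atTop_add_const_left _ 1 tendsto_id)

/-- For `γ > 5/3`, a positive C² solution of `a'' = a^{2-3γ}` with
`a(0) = α > 0`, `a'(0) = β` satisfies `a(t) = a₀ + t a₁ + m(t)` with `a₁ > 0`,
`|m(t)| = o(1+t)` and `|m'(t)| = |a'(t) - a₁| ≲ (1+t)^{3-3γ}`; in particular
`a(t)/t → a₁`. -/
theorem stmt19 (γ α β : ℝ) (hγ : 5 / 3 < γ) (a a' : ℝ → ℝ)
    (hpos : ∀ t ≥ (0:ℝ), 0 < a t)
    (hα : a 0 = α) (hαpos : 0 < α) (hβ : a' 0 = β)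
    (hda : ∀ t ≥ (0:ℝ), HasDerivAt a (a' t) t)
    (hda' : ∀ t ≥ (0:ℝ), HasDerivAt a' (a t ^ (2 - 3 * γ)) t) :
    ∃ a₀ a₁ : ℝ, 0 < a₁ ∧
      (∃ C > (0:ℝ), ∀ t ≥ (0:ℝ), |a' t - a₁| ≤ C * (1 + t) ^ (3 - 3 * γ)) ∧
      Tendsto (fun t => (a t - a₀ - t * a₁) / (1 + t)) atTop (nhds 0) ∧
      Tendsto (fun t => a t / t) atTop (nhds a₁) :=
  stmt19_general γ hγ a a' hpos hda hda'
end
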